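/- For T-algebras A and A' (T a cartesian monad), T-multicategory maps from M A to M A' correspond bijectively to T-algebra morphisms A → A'. -/

import Mathlib

open CategoryTheory

/-- A map of `T`-multicategories `M A ⟶ M A'` between the `T`-multicategories
`T A ⟵id T A ⟶h A` and `T A' ⟵id T A' ⟶h' A'` associated to `T`-algebras `(A, h)` and
`(A', h')`: a map of spans (`f₀` on objects, `f₁` on arrows, commuting with the legs)
which commutes with the identities (unit) and composition (multiplication) structure. -/
structure MSpanMap (T : Monad (Type u)) (A A' : Type u)
    (h : T.obj A → A) (h' : T.obj A' → A') : Type u where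
  f₀ : A → A'
  f₁ : T.obj A → T.obj A'
  dom_comm : ∀ x : T.obj A, T.map (TypeCat.ofHom f₀) x = f₁ x
  cod_comm : ∀ x : T.obj A, f₀ (h x) = h' (f₁ x)
  unit_comm : ∀ a : A, f₁ (T.η.app A a) = T.η.app A' (f₀ a)
  comp_comm : ∀ β : T.obj (T.obj A), f₁ (T.μ.app A β) = T.μ.app A' (T.map (TypeCat.ofHom f₁) β)

/-! Since the left leg of the span `M A` is the identity, the compatibility of a span map with
the domain legs forces `f₁ = T f₀`; a span map is therefore determined by `f₀`, and its
compatibility with the codomain legs `h`, `h'` is exactly the condition for `f₀` to be a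
`T`-algebra morphism. -/

namespace MSpanMap

variable {T : Monad (Type u)} {A A' : Type u} {h : T.obj A → A} {h' : T.obj A' → A'}

theorem f₁_eq_map_f₀ (m : MSpanMap T A A' h h') : m.f₁ = T.map (TypeCat.ofHom m.f₀) :=
  (funext m.dom_comm).symm

theorem f₀_algebra_comm (m : MSpanMap T A A' h h') (x : T.obj A) :
    m.f₀ (h x) = h' (T.map (TypeCat.ofHom m.f₀) x) := by
  rw [m.cod_comm, m.dom_comm]

theorem ext {m m' : MSpanMap T A A' h h'} (hf₀ : m.f₀ = m'.f₀) : m = m' := by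
  have hf₁ : m.f₁ = m'.f₁ := by rw [f₁_eq_map_f₀, f₁_eq_map_f₀, hf₀]
  cases m
  cases m'
  congr

end MSpanMap

theorem stmt_13_general (T : Monad (Type u))
    (A A' : Type u) (h : T.obj A → A) (h' : T.obj A' → A') :
    Function.Bijective
      (fun f : {g : A → A' // ∀ x : T.obj A, g (h x) = h' (T.map (TypeCat.ofHom g) x)} =>
        (⟨f.val, T.map (TypeCat.ofHom f.val), fun _ => rfl, f.property,
          fun a => (NatTrans.naturality_apply T.η (TypeCat.ofHom f.val) a).symm,
          fun β => (NatTrans.naturality_apply T.μ (TypeCat.ofHom f.val) β).symm⟩ :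
          MSpanMap T A A' h h')) := by
  refine ⟨fun f g hfg => Subtype.ext (congrArg MSpanMap.f₀ hfg), fun m => ?_⟩
  exact ⟨⟨m.f₀, m.f₀_algebra_comm⟩, MSpanMap.ext rfl⟩

/-- For `T`-algebras `(A, h)` and `(A', h')` (`T` a cartesian monad on `Set`),
`T`-multicategory maps `M A ⟶ M A'` correspond bijectively to `T`-algebra morphisms
`A → A'`. -/
theorem stmt_13 (T : Monad (Type u))
    (hpb : ∀ {X Y Z : Type u} (f : X → Z) (g : Y → Z) (a : T.obj X) (b : T.obj Y),
      T.map (TypeCat.ofHom f) a = T.map (TypeCat.ofHom g) b →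
      ∃! c : T.obj {p : X × Y // f p.1 = g p.2},
        T.map (TypeCat.ofHom (fun p => p.val.1)) c = a ∧ T.map (TypeCat.ofHom (fun p => p.val.2)) c = b)
    (hη : ∀ {X Y : Type u} (f : X → Y) (a : T.obj X) (y : Y),
      T.map (TypeCat.ofHom f) a = T.η.app Y y → ∃! x : X, T.η.app X x = a ∧ f x = y)
    (hμ : ∀ {X Y : Type u} (f : X → Y) (a : T.obj X) (b : T.obj (T.obj Y)),
      T.map (TypeCat.ofHom f) a = T.μ.app Y b →
      ∃! c : T.obj (T.obj X), T.μ.app X c = a ∧ T.map (T.map (TypeCat.ofHom f)) c = b)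
    (A A' : Type u) (h : T.obj A → A) (h' : T.obj A' → A')
    (halg : (∀ a, h (T.η.app A a) = a) ∧
      ∀ m : T.obj (T.obj A), h (T.μ.app A m) = h (T.map (TypeCat.ofHom h) m))
    (halg' : (∀ a, h' (T.η.app A' a) = a) ∧
      ∀ m : T.obj (T.obj A'), h' (T.μ.app A' m) = h' (T.map (TypeCat.ofHom h') m)) :
    Function.Bijective
      (fun f : {g : A → A' // ∀ x : T.obj A, g (h x) = h' (T.map (TypeCat.ofHom g) x)} =>
        (⟨f.val, T.map (TypeCat.ofHom f.val), fun _ => rfl, f.property,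
          fun a => (NatTrans.naturality_apply T.η (TypeCat.ofHom f.val) a).symm,
          fun β => (NatTrans.naturality_apply T.μ (TypeCat.ofHom f.val) β).symm⟩ :
          MSpanMap T A A' h h')) :=
  stmt_13_general T A A' h h'
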